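/- arXiv:2508.01947 — 2 statements merged into one kernel-verified Lean document; each statement's English description precedes it below -/
import Mathlib

section
/- A consistent sample set has a realizing DBMM, namely the PTT: if S is a sample set such that whenever two samples share the same beta-input prefix w and alpha input j, their recorded outputs agree, then there exists a DBMM M such that for every (x,y) ∈ S and every alpha-input position i, M's output after processing the beta inputs of x[1..i-1] on input x_i equals y_i. -/
/-!
The prefix tree transducer (PTT) has the beta-input words as states: reading a beta input appends
it to the state, so the state reached after a beta prefix `w` is `w` itself. On alpha input `j`,
state `w` outputs any output that `S` records at a position with beta prefix `w` and alpha input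
`j`; consistency says precisely that this choice does not matter.
-/

/-- The subsequence of beta inputs of a mixed input word over `Iα ⊕ Iβ`. -/
def betaPart {Iα Iβ : Type*} : List (Iα ⊕ Iβ) → List Iβ
  | [] => []
  | Sum.inl _ :: xs => betaPart xs
  | Sum.inr b :: xs => b :: betaPart xs

universe u v w

namespace SampleSet

variable {Iα : Type u} {Iβ : Type v} {Out : Type w}

def Records (S : Set (List (Iα ⊕ Iβ) × List Out)) (w : List Iβ) (j : Iα) (o : Out) : Prop :=
  ∃ x y i, (x, y) ∈ S ∧ x[i]? = some (Sum.inl j) ∧ y[i]? = some o ∧ betaPart (x.take i) = w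

theorem Records.eq {S : Set (List (Iα ⊕ Iβ) × List Out)}
    (hcons : ∀ x y x' y', (x, y) ∈ S → (x', y') ∈ S →
      ∀ (i i' : ℕ) (j : Iα) (o o' : Out),
        x[i]? = some (Sum.inl j) → y[i]? = some o →
        x'[i']? = some (Sum.inl j) → y'[i']? = some o' →
        betaPart (x.take i) = betaPart (x'.take i') → o = o')
    {w : List Iβ} {j : Iα} {o o' : Out} (h : Records S w j o) (h' : Records S w j o') :
    o = o' := by
  obtain ⟨x, y, i, hxy, hx, hy, rfl⟩ := h
  obtain ⟨x', y', i', hxy', hx', hy', hw⟩ := h'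
  exact hcons x y x' y' hxy hxy' i i' j o o' hx hy hx' hy' hw.symm

open Classical in
noncomputable def pttOutput (S : Set (List (Iα ⊕ Iβ) × List Out)) (w : List Iβ) (j : Iα) :
    Option Out :=
  if h : ∃ o, Records S w j o then some h.choose else none

theorem pttOutput_eq_some {S : Set (List (Iα ⊕ Iβ) × List Out)}
    (hfun : ∀ {w j o o'}, Records S w j o → Records S w j o' → o = o')
    {w : List Iβ} {j : Iα} {o : Out} (h : Records S w j o) : pttOutput S w j = some o := by
  have hex : ∃ o, Records S w j o := ⟨o, h⟩
  rw [pttOutput, dif_pos hex, hfun hex.choose_spec h]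

end SampleSet

theorem List.foldl_append_singleton {α : Type*} (l v : List α) :
    l.foldl (fun v b => v ++ [b]) v = v ++ l := by
  induction l generalizing v with
  | nil => simp
  | cons b l ih => simp [ih]

open SampleSet in
/-- A consistent sample set has a realizing DBMM (namely the PTT):
if whenever two samples share the same beta-input prefix and alpha input their
recorded outputs agree, then there exists a DBMM `(V, v0, T, G)` such that for
every sample `(x, y) ∈ S` and every alpha-input position `i`, the output of the
machine after processing the beta inputs of `x[1..i-1]` on input `x_i` equals
`y_i`. -/
theorem consistent_sample_set_realizable
    {Iα : Type u} {Iβ : Type v} {Out : Type w}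
    (S : Set (List (Iα ⊕ Iβ) × List Out))
    (hcons : ∀ x y x' y', (x, y) ∈ S → (x', y') ∈ S →
      ∀ (i i' : ℕ) (j : Iα) (o o' : Out),
        x[i]? = some (Sum.inl j) → y[i]? = some o →
        x'[i']? = some (Sum.inl j) → y'[i']? = some o' →
        betaPart (x.take i) = betaPart (x'.take i') → o = o') :
    ∃ (V : Type v) (v0 : V) (T : V → Iβ → V) (G : V → Iα → Option Out),
      ∀ x y, (x, y) ∈ S → ∀ (i : ℕ) (j : Iα) (o : Out),
        x[i]? = some (Sum.inl j) → y[i]? = some o →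
        G ((betaPart (x.take i)).foldl T v0) j = some o := by
  refine ⟨List Iβ, [], fun v b => v ++ [b], pttOutput S, ?_⟩
  intro x y hxy i j o hx hy
  rw [List.foldl_append_singleton, List.nil_append]
  exact pttOutput_eq_some (Records.eq hcons) ⟨x, y, i, hxy, hx, hy, rfl⟩
end

section
/- If the TM is resolvent, then in the observation-supplemented traces the reward non-Markovianity is purely reward-machine-based: for the augmented Det-POMDP whose observations are pairs (o, q) with q updated by the TM, any RM that is resolvent for the original Det-POMDP (with δ_U and δ_R lifted to augmented observations by ignoring the q-component for rewards and using the original labels) is resolvent for the augmented process, and the augmented process has Markovian (deterministic, history-independent) observation transitions. -/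
/-! On every feasible history the resolvent TM computes the next observation from `(q, o, a)`, and `q`
itself is updated from the label of `o`; so the augmented observation `(o, q)` evolves by one fixed
map of `(o, q)` and the action. The lifted RM ignores `q`, so its resolvency is that of the
original RM. -/

/-- One step of a Det-POMDP trajectory together with the Reward-Machine state
and the Transition-Machine state. -/
def runTMRM {S A O U Q Lbl : Type*} (P : S → A → S) (Z : S → O) (L : O → Lbl)
    (δU : U → Lbl → U) (δQ : Q → Lbl → Q) (init : S × U × Q) (as : List A) :
    S × U × Q :=
  as.foldl (fun p a => (P p.1 a, δU p.2.1 (L (Z p.1)), δQ p.2.2 (L (Z p.1)))) init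

def augmentedObsStep {O Q Lbl A : Type*} (L : O → Lbl) (δQ : Q → Lbl → Q) (δT : Q → O → A → O)
    (oq : O × Q) (a : A) : O × Q :=
  (δT oq.2 oq.1 a, δQ oq.2 (L oq.1))

theorem augmentedObsStep_eq_of_resolvent {S O Q Lbl A : Type*} {P : S → A → S} {Z : S → O}
    {L : O → Lbl} {δQ : Q → Lbl → Q} {δT : Q → O → A → O} {s : S} {q : Q} {a : A}
    (hres : δT q (Z s) a = Z (P s a)) :
    (Z (P s a), δQ q (L (Z s))) = augmentedObsStep L δQ δT (Z s, q) a := by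
  rw [augmentedObsStep, hres]

/-- If the TM is resolvent, then in the observation-supplemented
traces the reward non-Markovianity is purely reward-machine-based: for the
augmented process whose observations are the pairs `(o, q)` (with `q` updated by
the TM and labeling `L' (o, q) = L o`), (i) any RM resolvent for the original
Det-POMDP, lifted to augmented observations by ignoring the `q`-component
(`δR' u (o, q) a = δR u o a`), is resolvent for the augmented process, and
(ii) the augmented process has Markovian (deterministic, history-independent)
observation transitions: the next augmented observation is a function of the
current augmented observation and the action. -/
theorem observation_supplement_reward_only_nonmarkov
    {S A O U Q Lbl : Type*}
    (s0 : S) (P : S → A → S) (Z : S → O) (L : O → Lbl) (R : S → A → ℝ)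
    (u0 : U) (δU : U → Lbl → U) (δR : U → O → A → ℝ)
    (q0 : Q) (δQ : Q → Lbl → Q) (δT : Q → O → A → O)
    (hresT : ∀ (as : List A) (a : A),
      δT (runTMRM P Z L δU δQ (s0, u0, q0) as).2.2
          (Z (runTMRM P Z L δU δQ (s0, u0, q0) as).1) a
        = Z (P (runTMRM P Z L δU δQ (s0, u0, q0) as).1 a))
    (hresR : ∀ (as : List A) (a : A),
      δR (runTMRM P Z L δU δQ (s0, u0, q0) as).2.1
          (Z (runTMRM P Z L δU δQ (s0, u0, q0) as).1) a
        = R (runTMRM P Z L δU δQ (s0, u0, q0) as).1 a) :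
    -- (i) the lifted RM is resolvent for the augmented process
    (∀ (as : List A) (a : A),
      (fun (u : U) (oq : O × Q) (a : A) => δR u oq.1 a)
          (runTMRM P Z L δU δQ (s0, u0, q0) as).2.1
          (Z (runTMRM P Z L δU δQ (s0, u0, q0) as).1,
            (runTMRM P Z L δU δQ (s0, u0, q0) as).2.2) a
        = R (runTMRM P Z L δU δQ (s0, u0, q0) as).1 a)
    -- (ii) the augmented observation transitions are Markovian
    ∧ ∃ F : (O × Q) → A → (O × Q), ∀ (as : List A) (a : A),
        (Z (P (runTMRM P Z L δU δQ (s0, u0, q0) as).1 a),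
          δQ (runTMRM P Z L δU δQ (s0, u0, q0) as).2.2
            (L (Z (runTMRM P Z L δU δQ (s0, u0, q0) as).1)))
          = F (Z (runTMRM P Z L δU δQ (s0, u0, q0) as).1,
               (runTMRM P Z L δU δQ (s0, u0, q0) as).2.2) a :=
  ⟨hresR, augmentedObsStep L δQ δT, fun as a => augmentedObsStep_eq_of_resolvent (hresT as a)⟩
end
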